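/- arXiv:1606.06219 — 4 statements merged into one kernel-verified Lean document; each statement's English description precedes it below -/
import Mathlib

section
/- Let α, σ, γ > 0, c, d ∈ ℝ, and g_γ(z) = g(z) + (γ/2)z² with g as above. Then prox_{σ g_γ}(v) = (v − σc)/(1+σγ) if v > ((1+σγ)/α)(c−d) + σc, and prox_{σ g_γ}(v) = (v − σd)/(1 + σ(α+γ)) otherwise. -/
/-!
`x` minimizes `w ↦ ½ (w - v)² + σ h w` as soon as `(v - x) / σ` is a subgradient of `h` at `x`.
The function `g` is convex and C¹: right of its kink `(c - d) / α` it is affine with slope `c`,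
left of it quadratic with slope `α x + d` (the affine piece is the tangent there). Adding
`γ/2 · (·)²` adds `γ x` to the slope, so the optimality condition `(1 + σγ) x + σ s = v` is
solved by `(v - σc) / (1 + σγ)` on the right piece and `(v - σd) / (1 + σ(α + γ))` on the left
one; the threshold on `v` is exactly where these candidates cross the kink.
-/

open Set

theorem isMinOn_prox_of_subgradient {E : Type*} [NormedAddCommGroup E] [InnerProductSpace ℝ E]
    {h : E → ℝ} {σ : ℝ} {x v s : E} (hσ : 0 ≤ σ) (hs : ∀ w, h x + inner ℝ s (w - x) ≤ h w)
    (hv : v - x = σ • s) :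
    IsMinOn (fun w => 1 / 2 * ‖w - v‖ ^ 2 + σ * h w) univ x := by
  refine isMinOn_univ_iff.mpr fun w => ?_
  have hsplit : ‖w - v‖ ^ 2 = ‖w - x‖ ^ 2 - 2 * inner ℝ (w - x) (v - x) + ‖v - x‖ ^ 2 := by
    rw [← norm_sub_sq_real, sub_sub_sub_cancel_right]
  have hx : ‖x - v‖ = ‖v - x‖ := norm_sub_rev x v
  simp only [hsplit, hx, hv, real_inner_smul_right, real_inner_comm s]
  nlinarith [mul_le_mul_of_nonneg_left (hs w) hσ, sq_nonneg ‖w - x‖]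

theorem isMinOn_prox_add_sq_of_subgradient {h : ℝ → ℝ} {σ γ x v s : ℝ} (hσ : 0 ≤ σ)
    (hγ : 0 ≤ γ) (hs : ∀ w, h x + s * (w - x) ≤ h w) (hv : (1 + σ * γ) * x + σ * s = v) :
    IsMinOn (fun w => 1 / 2 * (w - v) ^ 2 + σ * (h w + γ / 2 * w ^ 2)) univ x := by
  have hsγ (w : ℝ) : h x + γ / 2 * x ^ 2 + inner ℝ (s + γ * x) (w - x) ≤ h w + γ / 2 * w ^ 2 := by
    rw [RCLike.inner_apply', conj_trivial]
    nlinarith [hs w, mul_nonneg hγ (sq_nonneg (w - x))]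
  simpa [Real.norm_eq_abs, sq_abs] using
    isMinOn_prox_of_subgradient (h := fun w => h w + γ / 2 * w ^ 2) hσ hsγ
      (by rw [smul_eq_mul]; linarith)

/-- The Fenchel conjugate of `v ↦ (v - d) ^ 2 / (2 * α) + ι_{(-∞, c]}(v)`, with kink at
`(c - d) / α`. -/
noncomputable def truncQuadConj (α c d z : ℝ) : ℝ :=
  if (c - d) / α < z then c * z - 1 / (2 * α) * (c - d) ^ 2 else α / 2 * z ^ 2 + z * d

section truncQuadConj

variable {α c d : ℝ}

theorem linear_piece_eq_quadratic_sub (hα : α ≠ 0) (z : ℝ) :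
    c * z - 1 / (2 * α) * (c - d) ^ 2 = α / 2 * z ^ 2 + z * d - α / 2 * (z - (c - d) / α) ^ 2 := by
  field_simp
  ring

theorem truncQuadConj_subgradient_of_lt (hα : 0 < α) {x : ℝ} (hx : (c - d) / α < x) (w : ℝ) :
    truncQuadConj α c d x + c * (w - x) ≤ truncQuadConj α c d w := by
  have hℓ := linear_piece_eq_quadratic_sub (c := c) (d := d) hα.ne'
  unfold truncQuadConj
  rw [if_pos hx]
  split_ifs
  · linarith
  · nlinarith [hℓ w, mul_nonneg hα.le (sq_nonneg (w - (c - d) / α))]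

theorem truncQuadConj_subgradient_of_le (hα : 0 < α) {x : ℝ} (hx : x ≤ (c - d) / α) (w : ℝ) :
    truncQuadConj α c d x + (α * x + d) * (w - x) ≤ truncQuadConj α c d w := by
  unfold truncQuadConj
  rw [if_neg hx.not_gt]
  split_ifs with hw
  · rw [linear_piece_eq_quadratic_sub hα.ne']
    nlinarith [mul_nonneg hα.le (mul_nonneg (sub_nonneg.2 hx) (sub_nonneg.2 (hx.trans hw.le)))]
  · nlinarith [mul_nonneg hα.le (sq_nonneg (w - x))]

end truncQuadConj

/-- Proximal mapping of the Moreau--Yosida regularized conjugate `g_γ = g + (γ/2)(·)²`. -/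
theorem stmt_15 (α σ γ c d : ℝ) (hα : 0 < α) (hσ : 0 < σ) (hγ : 0 < γ)
    (g : ℝ → ℝ)
    (hg : ∀ z : ℝ, g z =
      if (c - d) / α < z then c * z - (1 / (2 * α)) * (c - d) ^ 2
      else (α / 2) * z ^ 2 + z * d)
    (v : ℝ) :
    IsMinOn (fun w : ℝ => (1 / 2) * (w - v) ^ 2 + σ * (g w + γ / 2 * w ^ 2)) Set.univ
      (if ((1 + σ * γ) / α) * (c - d) + σ * c < v
       then (v - σ * c) / (1 + σ * γ)
       else (v - σ * d) / (1 + σ * (α + γ))) := by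
  obtain rfl : g = truncQuadConj α c d := funext hg
  have hA : 0 < 1 + σ * γ := by positivity
  have hB : 0 < 1 + σ * (α + γ) := by positivity
  have hkink : (1 + σ * γ) / α * (c - d) = (1 + σ * γ) * ((c - d) / α) := by ring
  have hαt : α * ((c - d) / α) = c - d := mul_div_cancel₀ _ hα.ne'
  rw [hkink]
  split_ifs with hv
  · refine isMinOn_prox_add_sq_of_subgradient hσ.le hγ.le
      (truncQuadConj_subgradient_of_lt hα ?_) (by field_simp; ring)
    rw [lt_div_iff₀ hA]
    linarith
  · refine isMinOn_prox_add_sq_of_subgradient hσ.le hγ.le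
      (truncQuadConj_subgradient_of_le hα ?_) (by field_simp; ring)
    rw [div_le_iff₀ hB]
    nlinarith
end

section
/- Let Ḡ: X → X, F̄: Y → Y be bounded self-adjoint linear operators on Hilbert spaces X, Y, K̄: X → Y bounded linear, and Γ = Γ_G × Γ_F ⊂ X × Y a cone. Define T(ξ,η) = (Ḡξ + K̄*η, −K̄ξ + F̄η). If ⟨Ḡξ, ξ⟩ ≥ c_G²‖ξ‖² for all ξ ∈ Γ_G and ⟨F̄η, η⟩ ≥ c_F²‖η‖² for all η ∈ Γ_F with c_G, c_F > 0, then there is c > 0 with inf_{z ∈ Γ°} ‖T*w − z‖² ≥ c‖w‖² for all w ∈ Γ, where Γ° is the polar cone of Γ. -/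
/-- Lower bound `inf_{z ∈ Γ°} ‖T*w − z‖² ≥ c‖w‖²` on the cone `Γ = Γ_G × Γ_F` for the
block operator `T(ξ,η) = (Ḡξ + K̄*η, −K̄ξ + F̄η)`, stated componentwise. -/
theorem stmt_16 {X Y : Type*}
    [NormedAddCommGroup X] [InnerProductSpace ℝ X] [CompleteSpace X]
    [NormedAddCommGroup Y] [InnerProductSpace ℝ Y] [CompleteSpace Y]
    (Gb : X →L[ℝ] X) (Fb : Y →L[ℝ] Y) (Kb : X →L[ℝ] Y)
    (hGsa : IsSelfAdjoint Gb) (hFsa : IsSelfAdjoint Fb)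
    (ΓG : Set X) (ΓF : Set Y)
    (hconeG : ∀ ξ ∈ ΓG, ∀ t : ℝ, 0 ≤ t → t • ξ ∈ ΓG)
    (hconeF : ∀ η ∈ ΓF, ∀ t : ℝ, 0 ≤ t → t • η ∈ ΓF)
    (cG cF : ℝ) (hcG : 0 < cG) (hcF : 0 < cF)
    (hGpos : ∀ ξ ∈ ΓG, cG ^ 2 * ‖ξ‖ ^ 2 ≤ (inner ℝ (Gb ξ) ξ : ℝ))
    (hFpos : ∀ η ∈ ΓF, cF ^ 2 * ‖η‖ ^ 2 ≤ (inner ℝ (Fb η) η : ℝ)) :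
    ∃ c : ℝ, 0 < c ∧ ∀ ξ ∈ ΓG, ∀ η ∈ ΓF, ∀ μ : X, ∀ ν : Y,
      (∀ ξ' ∈ ΓG, ∀ η' ∈ ΓF, (inner ℝ μ ξ' : ℝ) + (inner ℝ ν η' : ℝ) ≤ 0) →
      c * (‖ξ‖ ^ 2 + ‖η‖ ^ 2) ≤
        ‖Gb ξ - (ContinuousLinearMap.adjoint Kb) η - μ‖ ^ 2 +
        ‖Kb ξ + Fb η - ν‖ ^ 2 := by
  set m := min (cG ^ 2) (cF ^ 2) with hm
  have hm0 : 0 < m := lt_min (by positivity) (by positivity)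
  refine ⟨m ^ 2, by positivity, ?_⟩
  intro ξ hξ η hη μ ν hpolar
  set a := Gb ξ - (ContinuousLinearMap.adjoint Kb) η - μ with ha
  set b := Kb ξ + Fb η - ν with hb
  set S := ‖ξ‖ ^ 2 + ‖η‖ ^ 2 with hS
  have hS0 : (0:ℝ) ≤ S := by positivity
  have key : m * S ≤ (inner ℝ a ξ : ℝ) + (inner ℝ b η : ℝ) := by
    have hcross : (inner ℝ ((ContinuousLinearMap.adjoint Kb) η) ξ : ℝ) = inner ℝ (Kb ξ) η := by
      rw [ContinuousLinearMap.adjoint_inner_left]; exact real_inner_comm _ _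
    have hpol := hpolar ξ hξ η hη
    have h1 := hGpos ξ hξ
    have h2 := hFpos η hη
    have e : (inner ℝ a ξ : ℝ) + (inner ℝ b η : ℝ) =
        (inner ℝ (Gb ξ) ξ : ℝ) + (inner ℝ (Fb η) η : ℝ) - ((inner ℝ μ ξ : ℝ) + (inner ℝ ν η : ℝ)) := by
      simp only [ha, hb, inner_sub_left, inner_add_left]
      rw [hcross]
      ring
    have hmg : m * ‖ξ‖ ^ 2 ≤ cG ^ 2 * ‖ξ‖ ^ 2 :=
      mul_le_mul_of_nonneg_right (min_le_left _ _) (by positivity)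
    have hmf : m * ‖η‖ ^ 2 ≤ cF ^ 2 * ‖η‖ ^ 2 :=
      mul_le_mul_of_nonneg_right (min_le_right _ _) (by positivity)
    rw [e, hS]
    nlinarith
  have ca : (inner ℝ a ξ : ℝ) ≤ ‖a‖ * ‖ξ‖ := real_inner_le_norm a ξ
  have cb : (inner ℝ b η : ℝ) ≤ ‖b‖ * ‖η‖ := real_inner_le_norm b η
  have hP : m * S ≤ ‖a‖ * ‖ξ‖ + ‖b‖ * ‖η‖ := by linarith
  have hCS : (‖a‖ * ‖ξ‖ + ‖b‖ * ‖η‖) ^ 2 ≤ (‖a‖ ^ 2 + ‖b‖ ^ 2) * S := by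
    rw [hS]; nlinarith [sq_nonneg (‖a‖ * ‖η‖ - ‖b‖ * ‖ξ‖)]
  rcases eq_or_lt_of_le hS0 with h0 | hSpos
  · rw [← h0]; simp [← hS, ← h0]; positivity
  · have h1 : (m * S) ^ 2 ≤ (‖a‖ * ‖ξ‖ + ‖b‖ * ‖η‖) ^ 2 := by
      have : 0 ≤ m * S := le_of_lt (mul_pos hm0 hSpos)
      nlinarith
    have h2 : m ^ 2 * S * S ≤ (‖a‖ ^ 2 + ‖b‖ ^ 2) * S := by nlinarith
    have := le_of_mul_le_mul_right h2 hSpos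
    linarith
end

section
/- Let α > 0, c, d ∈ ℝ and define the set-valued map ∂f*(z) = {c} for z > (c−d)/α and ∂f*(z) = {αz + d} for z ≤ (c−d)/α. Then the graphical derivative of ∂f* at (v, ζ) ∈ graph(∂f*) in direction v̇ is: {0} if αv > c−d; {αv̇} if αv < c−d; {0} if αv = c−d and v̇ ≥ 0; {αv̇} if αv = c−d and v̇ < 0. -/
/-!
Since `s z = min (α z + d) c`, near each point `v` the map `s` is a translate of a positively
homogeneous continuous map `φ`: the zero map where `s` is constant, `h ↦ α h` where `s` is
affine, and `h ↦ α min h 0` at the kink `α v = c - d`. For such a first-order expansion the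
tangent cone of the graph at `(v, s v)` is exactly the graph of `φ`.
-/

open Filter Topology

variable {E F : Type*} [NormedAddCommGroup E] [NormedSpace ℝ E]
  [NormedAddCommGroup F] [NormedSpace ℝ F]

def graphicalDerivative (s : E → F) (v : E) (ζ : F) (vdot : E) : Set F :=
  {ζdot | ∃ τ : ℕ → ℝ, (∀ n, 0 < τ n) ∧ Tendsto τ atTop (𝓝 0) ∧
    ∃ p : ℕ → E × F, (∀ n, (p n).2 = s (p n).1) ∧
      Tendsto (fun n => (τ n)⁻¹ • (p n - (v, ζ))) atTop (𝓝 (vdot, ζdot))}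

section LocalExpansion

variable {s φ : E → F} {v : E}

theorem eq_of_mem_graphicalDerivative (hφ : Continuous φ)
    (hhom : ∀ r : ℝ, 0 < r → ∀ h, φ (r • h) = r • φ h)
    (hloc : ∀ᶠ h in 𝓝 0, s (v + h) = s v + φ h) {vdot : E} {ζdot : F}
    (hmem : ζdot ∈ graphicalDerivative s v (s v) vdot) : ζdot = φ vdot := by
  obtain ⟨τ, hτpos, hτ, p, hp, hlim⟩ := hmem
  set q : ℕ → E := fun n => (τ n)⁻¹ • ((p n).1 - v)
  have hq : Tendsto q atTop (𝓝 vdot) := hlim.fst_nhds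
  have hdiff : ∀ n, (p n).1 - v = τ n • q n := fun n => by
    simp only [q, smul_inv_smul₀ (hτpos n).ne']
  have hdiff_lim : Tendsto (fun n => (p n).1 - v) atTop (𝓝 0) := by
    simpa only [hdiff, zero_smul] using hτ.smul hq
  have hsnd : ∀ᶠ n in atTop, (τ n)⁻¹ • ((p n).2 - s v) = φ (q n) := by
    filter_upwards [hdiff_lim.eventually hloc] with n hn
    rw [add_sub_cancel] at hn
    rw [hp, hn, add_sub_cancel_left, hdiff, hhom _ (hτpos n), inv_smul_smul₀ (hτpos n).ne']
  exact tendsto_nhds_unique (hlim.snd_nhds.congr' hsnd) ((hφ.tendsto vdot).comp hq)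

theorem mem_graphicalDerivative (hhom : ∀ r : ℝ, 0 < r → ∀ h, φ (r • h) = r • φ h)
    (hloc : ∀ᶠ h in 𝓝 0, s (v + h) = s v + φ h) (vdot : E) :
    φ vdot ∈ graphicalDerivative s v (s v) vdot := by
  set τ : ℕ → ℝ := fun n => 1 / ((n : ℝ) + 1)
  have hτpos : ∀ n, 0 < τ n := fun n => by positivity
  have hτ : Tendsto τ atTop (𝓝 0) := tendsto_one_div_add_atTop_nhds_zero_nat
  refine ⟨τ, hτpos, hτ, fun n => (v + τ n • vdot, s (v + τ n • vdot)), fun n => rfl,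
    tendsto_const_nhds.congr' ?_⟩
  have hstep : Tendsto (fun n => τ n • vdot) atTop (𝓝 0) := by
    simpa only [zero_smul] using hτ.smul_const vdot
  filter_upwards [hstep.eventually hloc] with n hn
  rw [hn, Prod.mk_sub_mk, add_sub_cancel_left, add_sub_cancel_left, hhom _ (hτpos n),
    ← Prod.smul_mk, inv_smul_smul₀ (hτpos n).ne']

theorem graphicalDerivative_eq_singleton (hφ : Continuous φ)
    (hhom : ∀ r : ℝ, 0 < r → ∀ h, φ (r • h) = r • φ h)
    (hloc : ∀ᶠ h in 𝓝 0, s (v + h) = s v + φ h) (vdot : E) :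
    graphicalDerivative s v (s v) vdot = {φ vdot} :=
  Set.eq_singleton_iff_unique_mem.mpr ⟨mem_graphicalDerivative hhom hloc vdot,
    fun _ => eq_of_mem_graphicalDerivative hφ hhom hloc⟩

end LocalExpansion

section MinAffine

variable {α c d : ℝ}

theorem tendsto_affine_nhds_zero (α d v : ℝ) :
    Tendsto (fun h : ℝ => α * (v + h) + d) (𝓝 0) (𝓝 (α * v + d)) := by
  simpa using ((continuous_const.add continuous_id).const_mul α).add_const d |>.tendsto 0

theorem min_affine_eventually_eq_const {v : ℝ} (hv : c - d < α * v) :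
    ∀ᶠ h in 𝓝 0, min (α * (v + h) + d) c = min (α * v + d) c + 0 := by
  have hc : c < α * v + d := by linarith
  filter_upwards [(tendsto_affine_nhds_zero α d v).eventually (lt_mem_nhds hc)] with h hh
  rw [min_eq_right hh.le, min_eq_right (by linarith), add_zero]

theorem min_affine_eventually_eq_affine {v : ℝ} (hv : α * v < c - d) :
    ∀ᶠ h in 𝓝 0, min (α * (v + h) + d) c = min (α * v + d) c + α * h := by
  have hc : α * v + d < c := by linarith
  filter_upwards [(tendsto_affine_nhds_zero α d v).eventually (gt_mem_nhds hc)] with h hh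
  rw [min_eq_left hh.le, min_eq_left (by linarith)]
  ring

theorem min_affine_eq_kink (hα : 0 ≤ α) {v : ℝ} (hv : c - d = α * v) (h : ℝ) :
    min (α * (v + h) + d) c = min (α * v + d) c + α * min h 0 := by
  have hc : c = α * v + d := by linarith
  rw [hc, min_self, mul_min_of_nonneg _ _ hα, mul_zero, ← min_add_add_left, add_zero]
  ring_nf

end MinAffine

theorem mul_min_zero_smul {α r : ℝ} (hr : 0 < r) (h : ℝ) :
    α * min (r • h) 0 = r • (α * min h 0) := by
  rw [smul_eq_mul, smul_eq_mul, ← mul_zero r, ← mul_min_of_nonneg _ _ hr.le, mul_zero]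
  ring

/-- Graphical derivative of the piecewise-defined subdifferential `∂f*`. -/
theorem stmt_17 (α c d : ℝ) (hα : 0 < α)
    (s : ℝ → ℝ) (hs : ∀ z : ℝ, s z = if (c - d) / α < z then c else α * z + d)
    (v ζ : ℝ) (hζ : ζ = s v) (vdot ζdot : ℝ) :
    (∃ τ : ℕ → ℝ, (∀ n, 0 < τ n) ∧ Filter.Tendsto τ Filter.atTop (nhds 0) ∧
      ∃ p : ℕ → ℝ × ℝ, (∀ n, (p n).2 = s (p n).1) ∧
        Filter.Tendsto (fun n => (τ n)⁻¹ • (p n - (v, ζ))) Filter.atTop (nhds (vdot, ζdot)))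
    ↔
    (if c - d < α * v then ζdot = 0
     else if α * v < c - d then ζdot = α * vdot
     else if 0 ≤ vdot then ζdot = 0 else ζdot = α * vdot) := by
  have hs_min : s = fun z => min (α * z + d) c := funext fun z => by
    rw [hs]
    split_ifs with hz
    · exact (min_eq_right (by linarith [(div_lt_iff₀' hα).mp hz])).symm
    · exact (min_eq_left (by linarith [(le_div_iff₀' hα).mp (not_lt.mp hz)])).symm
  change ζdot ∈ graphicalDerivative s v ζ vdot ↔ _
  subst hζ hs_min
  rcases lt_trichotomy (c - d) (α * v) with hv | hv | hv
  · rw [if_pos hv, graphicalDerivative_eq_singleton (φ := fun _ => 0) continuous_const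
      (fun _ _ _ => (smul_zero _).symm) (min_affine_eventually_eq_const hv)]
    rfl
  · rw [if_neg hv.not_lt, if_neg hv.symm.not_lt, graphicalDerivative_eq_singleton
      (φ := fun h => α * min h 0) (by fun_prop) (fun _ hr h => mul_min_zero_smul hr h)
      (Eventually.of_forall (min_affine_eq_kink hα.le hv))]
    split_ifs with hvdot
    · simp [min_eq_right hvdot]
    · simp [min_eq_left (not_le.mp hvdot).le]
  · rw [if_neg (lt_asymm hv), if_pos hv, graphicalDerivative_eq_singleton (φ := fun h => α * h)
      (by fun_prop) (fun r _ h => mul_smul_comm r α h)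
      (min_affine_eventually_eq_affine hv)]
    rfl
end

section
/- Let X, Y be Hilbert spaces, τ, σ > 0, and A: X → Y a bounded linear operator with στ‖A‖² < 1. Then the self-adjoint block operator M on X × Y given by M(ξ,η) = (τ^{-1}ξ − A*η, −Aξ + σ^{-1}η) satisfies θ²·Id ≤ M ≤ Θ²·Id for some constants 0 < θ ≤ Θ, i.e., θ²(‖ξ‖² + ‖η‖²) ≤ ⟨M(ξ,η),(ξ,η)⟩ ≤ Θ²(‖ξ‖² + ‖η‖²) for all (ξ,η) ∈ X × Y. -/
/-!
Write `p = τ⁻¹`, `q = σ⁻¹`, `a = ‖A‖`. Since `|⟪Aξ, η⟫| ≤ a‖ξ‖‖η‖`, the quadratic form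
`⟪M(ξ,η), (ξ,η)⟫ = p‖ξ‖² - 2⟪Aξ, η⟫ + q‖η‖²` is squeezed between the binary forms
`p u² ∓ 2auv + q v²` in `u = ‖ξ‖`, `v = ‖η‖`. The upper bound `(max p q + a)(u² + v²)` is
immediate. For the lower one, `c = (pq - a²)/(p + q)` is at most the smaller eigenvalue of
`[[p, -a], [-a, q]]`, because `(p - c)(q - c) = a² + c² ≥ a²` while `p - c, q - c ≥ 0`;
and `c > 0` is exactly the step-length condition `στ‖A‖² < 1`.
-/

lemma two_mul_mul_le_of_sq_le_mul {α β a : ℝ} (hα : 0 ≤ α) (hβ : 0 ≤ β) (h : a ^ 2 ≤ α * β)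
    (u v : ℝ) : 2 * a * u * v ≤ α * u ^ 2 + β * v ^ 2 := by
  rcases hα.eq_or_lt with rfl | hα
  · have ha : a = 0 := by nlinarith
    simp only [ha, mul_zero, zero_mul, zero_add]
    positivity
  · -- `α (α u² + β v² - 2auv) = (αu - av)² + (αβ - a²) v²`
    nlinarith [sq_nonneg (α * u - a * v), mul_nonneg (sub_nonneg.2 h) (sq_nonneg v)]

lemma mul_sub_sq_div_add_le_left {p q : ℝ} (hpq : 0 < p + q) (a : ℝ) :
    (p * q - a ^ 2) / (p + q) ≤ p := by
  rw [div_le_iff₀ hpq]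
  nlinarith [sq_nonneg p, sq_nonneg a]

lemma mul_sub_sq_div_add_mul_le {p q : ℝ} (hpq : 0 < p + q) (a u v : ℝ) :
    (p * q - a ^ 2) / (p + q) * (u ^ 2 + v ^ 2) ≤ p * u ^ 2 - 2 * a * u * v + q * v ^ 2 := by
  set c := (p * q - a ^ 2) / (p + q) with hc
  have hcp : c ≤ p := mul_sub_sq_div_add_le_left hpq a
  have hcq : c ≤ q := by
    rw [hc, mul_comm p q, add_comm p q]
    exact mul_sub_sq_div_add_le_left (by linarith) a
  have hc_mul : c * (p + q) = p * q - a ^ 2 := div_mul_cancel₀ _ hpq.ne'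
  have hdet : a ^ 2 ≤ (p - c) * (q - c) := by nlinarith [sq_nonneg c]
  have := two_mul_mul_le_of_sq_le_mul (sub_nonneg.2 hcp) (sub_nonneg.2 hcq) hdet u v
  linarith

lemma le_max_add_abs_mul (p q a u v : ℝ) :
    p * u ^ 2 - 2 * a * u * v + q * v ^ 2 ≤ (max p q + |a|) * (u ^ 2 + v ^ 2) := by
  have hp : p * u ^ 2 ≤ max p q * u ^ 2 := by gcongr; exact le_max_left p q
  have hq : q * v ^ 2 ≤ max p q * v ^ 2 := by gcongr; exact le_max_right p q
  have hcross := two_mul_mul_le_of_sq_le_mul (a := -a) (abs_nonneg a) (abs_nonneg a)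
    (by rw [abs_mul_abs_self, neg_sq, sq]) u v
  linarith

lemma abs_inner_apply_le {X Y : Type*}
    [NormedAddCommGroup X] [InnerProductSpace ℝ X] [NormedAddCommGroup Y] [InnerProductSpace ℝ Y]
    (A : X →L[ℝ] Y) (ξ : X) (η : Y) : |(inner ℝ (A ξ) η : ℝ)| ≤ ‖A‖ * ‖ξ‖ * ‖η‖ :=
  (abs_real_inner_le_norm _ _).trans (by gcongr; exact A.le_opNorm ξ)

theorem stmt_19_general {X Y : Type*}
    [NormedAddCommGroup X] [InnerProductSpace ℝ X]
    [NormedAddCommGroup Y] [InnerProductSpace ℝ Y]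
    (τ σ : ℝ) (hτ : 0 < τ) (hσ : 0 < σ)
    (A : X →L[ℝ] Y) (hA : σ * τ * ‖A‖ ^ 2 < 1) :
    ∃ θ Θ : ℝ, 0 < θ ∧ θ ≤ Θ ∧ ∀ (ξ : X) (η : Y),
      θ ^ 2 * (‖ξ‖ ^ 2 + ‖η‖ ^ 2) ≤
          τ⁻¹ * ‖ξ‖ ^ 2 - 2 * (inner ℝ (A ξ) η : ℝ) + σ⁻¹ * ‖η‖ ^ 2 ∧
      τ⁻¹ * ‖ξ‖ ^ 2 - 2 * (inner ℝ (A ξ) η : ℝ) + σ⁻¹ * ‖η‖ ^ 2 ≤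
          Θ ^ 2 * (‖ξ‖ ^ 2 + ‖η‖ ^ 2) := by
  have hsum : 0 < τ⁻¹ + σ⁻¹ := by positivity
  have hdet : ‖A‖ ^ 2 < τ⁻¹ * σ⁻¹ := by
    calc ‖A‖ ^ 2 = σ * τ * ‖A‖ ^ 2 * (τ⁻¹ * σ⁻¹) := by field_simp
      _ < 1 * (τ⁻¹ * σ⁻¹) := by gcongr
      _ = τ⁻¹ * σ⁻¹ := one_mul _
  set c := (τ⁻¹ * σ⁻¹ - ‖A‖ ^ 2) / (τ⁻¹ + σ⁻¹)
  set C := max τ⁻¹ σ⁻¹ + ‖A‖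
  have hc : 0 < c := div_pos (sub_pos.2 hdet) hsum
  have hcC : c ≤ C := (mul_sub_sq_div_add_le_left hsum _).trans
    ((le_max_left _ _).trans (le_add_of_nonneg_right (norm_nonneg A)))
  refine ⟨√c, √C, Real.sqrt_pos.2 hc, Real.sqrt_le_sqrt hcC, fun ξ η => ?_⟩
  rw [Real.sq_sqrt hc.le, Real.sq_sqrt (hc.le.trans hcC)]
  have hinner := abs_le.1 (abs_inner_apply_le A ξ η)
  have hlower := mul_sub_sq_div_add_mul_le hsum ‖A‖ ‖ξ‖ ‖η‖
  have hupper := le_max_add_abs_mul τ⁻¹ σ⁻¹ (-‖A‖) ‖ξ‖ ‖η‖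
  rw [abs_neg, abs_norm] at hupper
  constructor <;> linarith

/-- Uniform bounds `θ²Id ≤ M ≤ Θ²Id` for the preconditioning block operator
`M(ξ,η) = (τ⁻¹ξ − A*η, −Aξ + σ⁻¹η)`, stated via the quadratic form
`⟨M(ξ,η),(ξ,η)⟩ = τ⁻¹‖ξ‖² − 2⟨Aξ,η⟩ + σ⁻¹‖η‖²`. -/
theorem stmt_19 {X Y : Type*}
    [NormedAddCommGroup X] [InnerProductSpace ℝ X] [CompleteSpace X]
    [NormedAddCommGroup Y] [InnerProductSpace ℝ Y] [CompleteSpace Y]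
    (τ σ : ℝ) (hτ : 0 < τ) (hσ : 0 < σ)
    (A : X →L[ℝ] Y) (hA : σ * τ * ‖A‖ ^ 2 < 1) :
    ∃ θ Θ : ℝ, 0 < θ ∧ θ ≤ Θ ∧ ∀ (ξ : X) (η : Y),
      θ ^ 2 * (‖ξ‖ ^ 2 + ‖η‖ ^ 2) ≤
          τ⁻¹ * ‖ξ‖ ^ 2 - 2 * (inner ℝ (A ξ) η : ℝ) + σ⁻¹ * ‖η‖ ^ 2 ∧
      τ⁻¹ * ‖ξ‖ ^ 2 - 2 * (inner ℝ (A ξ) η : ℝ) + σ⁻¹ * ‖η‖ ^ 2 ≤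
          Θ ^ 2 * (‖ξ‖ ^ 2 + ‖η‖ ^ 2) :=
  stmt_19_general τ σ hτ hσ A hA
end
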